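/- Let λ and ν be probability measures on ℝ with finite second moments, equal means, and variances v_λ, v_ν. Then W₂(λ, ν) ≥ |√v_λ - √v_ν|. -/

import Mathlib

open MeasureTheory

/-- The Wasserstein distance of order 2 between two probability measures on `ℝ`,
defined as the infimum over couplings of the `L²` transport cost. -/
noncomputable def W2 (lam nu : Measure ℝ) : ℝ :=
  sInf { r : ℝ | ∃ ξ : Measure (ℝ × ℝ), IsProbabilityMeasure ξ ∧
    ξ.map Prod.fst = lam ∧ ξ.map Prod.snd = nu ∧
    r = (∫ q, (q.1 - q.2) ^ 2 ∂ξ) ^ ((1 : ℝ) / 2) }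

/-!
Centre both marginals of a coupling `ξ` at `mean`: the centred coordinates `X - mean` and
`Y - mean` have `L²(ξ)` norms `√v_λ` and `√v_ν`, and their difference is `X - Y`, whose norm is
the transport cost of `ξ`. The reverse triangle inequality in `L²(ξ)` gives the bound for every
coupling, hence for the infimum.
-/

theorem MeasureTheory.MemLp.norm_toLp_two_eq_sqrt {α : Type*} [MeasurableSpace α]
    {μ : Measure α} {f : α → ℝ} (hf : MemLp f 2 μ) :
    ‖hf.toLp f‖ = Real.sqrt (∫ a, f a ^ 2 ∂μ) := by
  rw [Lp.norm_toLp, hf.eLpNorm_eq_integral_rpow_norm two_ne_zero ENNReal.ofNat_ne_top,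
    ENNReal.toReal_ofReal (by positivity), Real.sqrt_eq_rpow]
  simp only [ENNReal.toReal_ofNat, Real.rpow_two, Real.norm_eq_abs, sq_abs, one_div]

theorem abs_sqrt_integral_sq_sub_sqrt_integral_sq_le {α : Type*} [MeasurableSpace α]
    {μ : Measure α} {f g : α → ℝ} (hf : MemLp f 2 μ) (hg : MemLp g 2 μ) :
    |Real.sqrt (∫ a, f a ^ 2 ∂μ) - Real.sqrt (∫ a, g a ^ 2 ∂μ)| ≤
      Real.sqrt (∫ a, (f a - g a) ^ 2 ∂μ) := by
  have h := abs_norm_sub_norm_le (hf.toLp f) (hg.toLp g)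
  rwa [← MemLp.toLp_sub, hf.norm_toLp_two_eq_sqrt, hg.norm_toLp_two_eq_sqrt,
    (hf.sub hg).norm_toLp_two_eq_sqrt] at h

section Marginal

variable {Ω : Type*} [MeasurableSpace Ω] {ξ : Measure Ω} {X : Ω → ℝ} {μ : Measure ℝ}

theorem memLp_sub_const_of_map_eq [IsFiniteMeasure ξ] (hX : Measurable X) (hmap : ξ.map X = μ)
    (h2 : MemLp id 2 μ) (m : ℝ) : MemLp (fun ω => X ω - m) 2 ξ :=
  ((memLp_map_measure_iff aestronglyMeasurable_id hX.aemeasurable).mp (hmap ▸ h2)).sub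
    (memLp_const m)

theorem integral_sq_sub_const_of_map_eq (hX : Measurable X) (hmap : ξ.map X = μ) (m : ℝ) :
    ∫ ω, (X ω - m) ^ 2 ∂ξ = ∫ t, (t - m) ^ 2 ∂μ := by
  rw [← hmap, integral_map hX.aemeasurable (by fun_prop)]

end Marginal

theorem le_W2_of_forall_coupling {lam nu : Measure ℝ} [IsProbabilityMeasure lam]
    [IsProbabilityMeasure nu] {c : ℝ}
    (h : ∀ ξ : Measure (ℝ × ℝ), IsProbabilityMeasure ξ → ξ.map Prod.fst = lam →
      ξ.map Prod.snd = nu → c ≤ (∫ q, (q.1 - q.2) ^ 2 ∂ξ) ^ ((1 : ℝ) / 2)) :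
    c ≤ W2 lam nu := by
  refine le_csInf ⟨_, lam.prod nu, inferInstance, by simp, by simp, rfl⟩ ?_
  rintro r ⟨ξ, hξ, hfst, hsnd, rfl⟩
  exact h ξ hξ hfst hsnd

theorem stmt6_general (lam nu : Measure ℝ) [IsProbabilityMeasure lam] [IsProbabilityMeasure nu]
    (hl2 : MemLp id 2 lam) (hn2 : MemLp id 2 nu)
    (mean : ℝ)
    (vl vn : ℝ) (hvl : vl = ∫ t, (t - mean) ^ 2 ∂lam) (hvn : vn = ∫ t, (t - mean) ^ 2 ∂nu) :
    |Real.sqrt vl - Real.sqrt vn| ≤ W2 lam nu := by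
  refine le_W2_of_forall_coupling fun ξ _ hfst hsnd => ?_
  have hX := memLp_sub_const_of_map_eq measurable_fst hfst hl2 mean
  have hY := memLp_sub_const_of_map_eq measurable_snd hsnd hn2 mean
  rw [hvl, hvn, ← integral_sq_sub_const_of_map_eq measurable_fst hfst,
    ← integral_sq_sub_const_of_map_eq measurable_snd hsnd, ← Real.sqrt_eq_rpow]
  simpa only [sub_sub_sub_cancel_right] using abs_sqrt_integral_sq_sub_sqrt_integral_sq_le hX hY

/-- Gelbrich's lower bound in dimension one: for probability measures with finite second
moments and equal means, `W₂(λ, ν) ≥ |√v_λ - √v_ν|`. -/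
theorem stmt6 (lam nu : Measure ℝ) [IsProbabilityMeasure lam] [IsProbabilityMeasure nu]
    (hl2 : MemLp id 2 lam) (hn2 : MemLp id 2 nu)
    (mean : ℝ) (hlmean : ∫ t, t ∂lam = mean) (hnmean : ∫ t, t ∂nu = mean)
    (vl vn : ℝ) (hvl : vl = ∫ t, (t - mean) ^ 2 ∂lam) (hvn : vn = ∫ t, (t - mean) ^ 2 ∂nu) :
    |Real.sqrt vl - Real.sqrt vn| ≤ W2 lam nu :=
  stmt6_general lam nu hl2 hn2 mean vl vn hvl hvn
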